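/- The set F := [0,1] × [0,1] × {0} ⊆ ℝ³ is Minkowski measurable of dimension 2 with 2-dimensional Minkowski content equal to 2, i.e. lim_{ε→0+} ε^{−1} λ_3(F_ε) = 2. In particular, the attractor of the lattice self-similar system {x/2, x/2 + (1/2,0,0), x/2 + (0,1/2,0), x/2 + (1/2,1/2,0)} on ℝ³, which has integer Minkowski dimension 2 < 3, is Minkowski measurable. -/

import Mathlib

open MeasureTheory Filter Set Topology

/-- The `ε`-parallel set `A_ε = {x : dist(x,A) ≤ ε}`. -/
def pSet {d : ℕ} (A : Set (EuclideanSpace ℝ (Fin d))) (ε : ℝ) :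
    Set (EuclideanSpace ℝ (Fin d)) :=
  {x | Metric.infDist x A ≤ ε}

/-- The vector `(a, b, c) ∈ ℝ³`. -/
noncomputable def vec3 (a b c : ℝ) : EuclideanSpace ℝ (Fin 3) :=
  (EuclideanSpace.equiv (Fin 3) ℝ).symm ![a, b, c]

/-- The four similarity maps `S_1(x) = x/2`, `S_2(x) = x/2 + (1/2,0,0)`,
`S_3(x) = x/2 + (0,1/2,0)`, `S_4(x) = x/2 + (1/2,1/2,0)` on `ℝ³` (a lattice self-similar
system with common ratio `1/2`). -/
noncomputable def sqMap : Fin 4 → EuclideanSpace ℝ (Fin 3) → EuclideanSpace ℝ (Fin 3) :=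
  ![fun x => (1 / 2 : ℝ) • x,
    fun x => (1 / 2 : ℝ) • x + vec3 (1 / 2) 0 0,
    fun x => (1 / 2 : ℝ) • x + vec3 0 (1 / 2) 0,
    fun x => (1 / 2 : ℝ) • x + vec3 (1 / 2) (1 / 2) 0]

/-- The unit square `[0,1] × [0,1] × {0} ⊆ ℝ³`. -/
def sqF : Set (EuclideanSpace ℝ (Fin 3)) :=
  {x | x 0 ∈ Set.Icc (0 : ℝ) 1 ∧ x 1 ∈ Set.Icc (0 : ℝ) 1 ∧ x 2 = 0}

/-
The parallel set `F_ε` is squeezed between two boxes: the slab `[0,1]² × [-ε, ε]`, whose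
points lie within `ε` of their projection onto `F`, and `[-ε, 1+ε]² × [-ε, ε]`, since each
coordinate is `1`-Lipschitz. Hence `2ε ≤ λ₃(F_ε) ≤ 2ε(1+2ε)²`, and `ε⁻¹ λ₃(F_ε) → 2`.
The self-similarity is the splitting of `[0,1]²` into four squares of side `1/2`.
-/

theorem LipschitzWith.le_add_of_infDist_le {α : Type*} [PseudoMetricSpace α] {f : α → ℝ} (hf : LipschitzWith 1 f) {A : Set α}
    (hA : A.Nonempty) {c : ℝ} (hfA : ∀ y ∈ A, f y ≤ c) {x : α} {ε : ℝ}
    (hx : Metric.infDist x A ≤ ε) : f x ≤ c + ε := by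
  have : f x - c ≤ Metric.infDist x A := (Metric.le_infDist hA).2 fun y hy => by
    have := hf.le_add_mul x y
    rw [NNReal.coe_one, one_mul] at this
    linarith [hfA y hy]
  linarith

theorem EuclideanSpace.lipschitzWith_apply {ι : Type*} [Fintype ι] (i : ι) :
    LipschitzWith 1 fun x : EuclideanSpace ℝ ι => x i :=
  LipschitzWith.of_dist_le_mul fun x y => by simpa using PiLp.dist_apply_le x y i

theorem EuclideanSpace.volume_setOf_forall_mem {ι : Type*} [Fintype ι] (s : ι → Set ℝ) :
    volume {x : EuclideanSpace ℝ ι | ∀ i, x i ∈ s i} = ∏ i, volume (s i) := by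
  rw [← volume_pi_pi]
  convert (EuclideanSpace.volume_preserving_symm_measurableEquiv_toLp ι).measure_preimage_equiv
    (univ.pi s) using 2
  ext x
  simp

theorem EuclideanSpace.volume_box_fin_three (s₀ s₁ s₂ : Set ℝ) :
    volume {x : EuclideanSpace ℝ (Fin 3) | x 0 ∈ s₀ ∧ x 1 ∈ s₁ ∧ x 2 ∈ s₂}
      = volume s₀ * volume s₁ * volume s₂ := by
  simpa [Fin.forall_fin_succ, Fin.prod_univ_three, mul_assoc] using
    EuclideanSpace.volume_setOf_forall_mem ![s₀, s₁, s₂]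

@[simp] lemma vec3_apply_zero (a b c : ℝ) : vec3 a b c 0 = a := rfl
@[simp] lemma vec3_apply_one (a b c : ℝ) : vec3 a b c 1 = b := rfl
@[simp] lemma vec3_apply_two (a b c : ℝ) : vec3 a b c 2 = c := rfl

lemma sqF_nonempty : sqF.Nonempty :=
  ⟨vec3 0 0 0, by simp [sqF]⟩

lemma dist_vec3_proj_eq_abs (x : EuclideanSpace ℝ (Fin 3)) : dist x (vec3 (x 0) (x 1) 0) = |x 2| := by
  rw [EuclideanSpace.dist_eq, Fin.sum_univ_three]
  simp [Real.sqrt_sq_eq_abs]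

lemma slab_subset_pSet_sqF (ε : ℝ) :
    {x : EuclideanSpace ℝ (Fin 3) | x 0 ∈ Icc 0 1 ∧ x 1 ∈ Icc 0 1 ∧ x 2 ∈ Icc (-ε) ε}
      ⊆ pSet sqF ε := by
  rintro x ⟨h0, h1, h2⟩
  calc Metric.infDist x sqF ≤ dist x (vec3 (x 0) (x 1) 0) :=
        Metric.infDist_le_dist_of_mem ⟨h0, h1, rfl⟩
    _ ≤ ε := by rw [dist_vec3_proj_eq_abs]; exact abs_le.2 h2

lemma pSet_sqF_subset_box (ε : ℝ) :
    pSet sqF ε ⊆ {x : EuclideanSpace ℝ (Fin 3) |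
      x 0 ∈ Icc (-ε) (1 + ε) ∧ x 1 ∈ Icc (-ε) (1 + ε) ∧ x 2 ∈ Icc (-ε) ε} := by
  intro x (hx : Metric.infDist x sqF ≤ ε)
  have upper (i : Fin 3) {c : ℝ} (hc : ∀ y ∈ sqF, y i ≤ c) : x i ≤ c + ε :=
    (EuclideanSpace.lipschitzWith_apply i).le_add_of_infDist_le sqF_nonempty hc hx
  have lower (i : Fin 3) {c : ℝ} (hc : ∀ y ∈ sqF, c ≤ y i) : c - ε ≤ x i := by
    have := (EuclideanSpace.lipschitzWith_apply i).neg.le_add_of_infDist_le sqF_nonempty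
      (c := -c) (fun y hy => neg_le_neg (hc y hy)) hx
    simp only [Pi.neg_apply] at this
    linarith
  refine ⟨⟨?_, ?_⟩, ⟨?_, ?_⟩, ?_, ?_⟩
  · simpa using lower 0 fun y hy => hy.1.1
  · exact upper 0 fun y hy => hy.1.2
  · simpa using lower 1 fun y hy => hy.2.1.1
  · exact upper 1 fun y hy => hy.2.1.2
  · simpa using lower 2 fun y hy => hy.2.2.ge
  · simpa using upper 2 fun y hy => hy.2.2.le

lemma ofReal_two_mul_le_volume_pSet_sqF (ε : ℝ) :
    ENNReal.ofReal (2 * ε) ≤ volume (pSet sqF ε) := by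
  refine le_of_eq_of_le ?_ (measure_mono (slab_subset_pSet_sqF ε))
  rw [EuclideanSpace.volume_box_fin_three]
  simp only [Real.volume_Icc, sub_zero, ENNReal.ofReal_one, one_mul]
  ring_nf

lemma volume_pSet_sqF_le {ε : ℝ} (hε : 0 ≤ ε) :
    volume (pSet sqF ε) ≤ ENNReal.ofReal (2 * ε * (1 + 2 * ε) ^ 2) := by
  refine (measure_mono (pSet_sqF_subset_box ε)).trans_eq ?_
  rw [EuclideanSpace.volume_box_fin_three]
  simp only [Real.volume_Icc]
  rw [← ENNReal.ofReal_mul (by linarith), ← ENNReal.ofReal_mul (mul_self_nonneg _)]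
  ring_nf

lemma tendsto_inv_mul_volume_pSet_sqF :
    Tendsto (fun ε : ℝ => ε⁻¹ * (volume (pSet sqF ε)).toReal) (𝓝[>] 0) (𝓝 2) := by
  have upper_lim : Tendsto (fun ε : ℝ => 2 * (1 + 2 * ε) ^ 2) (𝓝[>] 0) (𝓝 2) := by
    have hcont : Continuous fun ε : ℝ => 2 * (1 + 2 * ε) ^ 2 := by fun_prop
    exact (hcont.tendsto' 0 2 (by norm_num)).mono_left nhdsWithin_le_nhds
  refine tendsto_of_tendsto_of_tendsto_of_le_of_le' tendsto_const_nhds upper_lim ?_ ?_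
  all_goals filter_upwards [self_mem_nhdsWithin] with ε (hε : 0 < ε)
  · have := ENNReal.toReal_mono (volume_pSet_sqF_le hε.le |>.trans_lt ENNReal.ofReal_lt_top).ne
      (ofReal_two_mul_le_volume_pSet_sqF ε)
    rw [ENNReal.toReal_ofReal (by positivity)] at this
    rw [le_inv_mul_iff₀ hε]
    linarith
  · have := ENNReal.toReal_mono ENNReal.ofReal_ne_top (volume_pSet_sqF_le hε.le)
    rw [ENNReal.toReal_ofReal (by positivity)] at this
    rw [inv_mul_le_iff₀ hε]
    linarith

lemma image_half_smul_add_vec3_sqF (a b : ℝ) :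
    (fun x => (1 / 2 : ℝ) • x + vec3 a b 0) '' sqF
      = {x | x 0 ∈ Icc a (a + 1 / 2) ∧ x 1 ∈ Icc b (b + 1 / 2) ∧ x 2 = 0} := by
  ext x
  constructor
  · rintro ⟨y, ⟨⟨hy₀, hy₀'⟩, ⟨hy₁, hy₁'⟩, hy₂⟩, rfl⟩
    refine ⟨⟨?_, ?_⟩, ⟨?_, ?_⟩, ?_⟩ <;> simp [hy₂] <;> linarith
  · rintro ⟨⟨hx₀, hx₀'⟩, ⟨hx₁, hx₁'⟩, hx₂⟩
    have hy : vec3 (2 * (x 0 - a)) (2 * (x 1 - b)) 0 ∈ sqF := by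
      refine ⟨⟨?_, ?_⟩, ⟨?_, ?_⟩, rfl⟩ <;> simp only [vec3_apply_zero, vec3_apply_one] <;> linarith
    refine ⟨_, hy, ?_⟩
    ext i
    fin_cases i <;> simp [hx₂]

lemma sqMap_eq_half_smul_add_vec3 (i : Fin 4) : sqMap i =
    fun x => (1 / 2 : ℝ) • x + vec3 (![0, 1 / 2, 0, 1 / 2] i) (![0, 0, 1 / 2, 1 / 2] i) 0 := by
  have vec3_zero : vec3 0 0 0 = 0 := by ext i; fin_cases i <;> rfl
  fin_cases i <;> simp [sqMap, vec3_zero]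

theorem sqF_eq_iUnion_image_sqMap : sqF = ⋃ i, sqMap i '' sqF := by
  have halves (t : ℝ) : t ∈ Icc 0 1 ↔ t ∈ Icc 0 (1 / 2) ∨ t ∈ Icc (1 / 2) (1 / 2 + 1 / 2) := by
    rw [← mem_union, Icc_union_Icc_eq_Icc] <;> norm_num
  ext x
  simp only [sqF, mem_iUnion, sqMap_eq_half_smul_add_vec3, image_half_smul_add_vec3_sqF,
    mem_ofPred_eq, halves, Fin.exists_fin_succ, IsEmpty.exists_iff, Matrix.cons_val_zero,
    Matrix.cons_val_succ, zero_add, or_false]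
  tauto

/-- The set `F = [0,1] × [0,1] × {0} ⊆ ℝ³` is Minkowski measurable of
dimension `2` with 2-dimensional Minkowski content `lim_{ε→0+} ε^{2−3} λ_3(F_ε) = 2`.
In particular, the attractor of the lattice self-similar system
`{x/2, x/2+(1/2,0,0), x/2+(0,1/2,0), x/2+(1/2,1/2,0)}` on `ℝ³` (which has integer
Minkowski dimension `2 < 3`) is Minkowski measurable. -/
theorem stmt18 :
    Tendsto (fun ε : ℝ => ε ^ ((2 : ℝ) - 3) * (volume (pSet sqF ε)).toReal)
      (𝓝[>] (0 : ℝ)) (𝓝 2) ∧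
    sqF = (⋃ i, sqMap i '' sqF) := by
  refine ⟨?_, sqF_eq_iUnion_image_sqMap⟩
  have rpow_eq_inv (ε : ℝ) : ε ^ ((2 : ℝ) - 3) = ε⁻¹ := by norm_num [Real.rpow_neg_one]
  simpa only [rpow_eq_inv] using tendsto_inv_mul_volume_pSet_sqF
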